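/- Let H be a Hilbert space, let A ⊆ B(H) be a unital C*-subalgebra containing all compact operators K(H), and let B ⊆ A be a Cartan subalgebra. Let X = {p_x} be the set of minimal projections of B, for each x ∈ X choose a unit vector ξ_x in the range of p_x (so {ξ_x}_{x∈X} is an orthonormal basis of H), and let u : ℓ²(X) → H be the unitary with u δ_x = ξ_x. Let 𝓔_A be the coarse structure on X generated by the sets E_{a,ε} = {(x,y) : ‖p_x a p_y‖ ≥ ε} for a ∈ N_A(B), ε > 0. Then u* B u ⊆ ℓ∞(X) and u* A u ⊆ C*_u(X; 𝓔_A). -/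

import Mathlib

/- Common definitions for formalising "Cartan subalgebras of uniform Roe algebras"
   (White–Willett).  We model C*-subalgebras of B(H) as norm-closed sets of
   continuous linear operators underlying non-unital star subalgebras. -/

open scoped InnerProductSpace ENNReal
open Filter

noncomputable section

universe u v

namespace RoeCartan

variable {H : Type u} [NormedAddCommGroup H] [InnerProductSpace ℂ H] [CompleteSpace H]

/-- A (possibly non-unital) C*-subalgebra of `B(H)`, viewed as a set of operators:
a norm-closed set which underlies a non-unital star subalgebra. -/
def IsCstarSubalgebra (A : Set (H →L[ℂ] H)) : Prop :=
  IsClosed A ∧ ∃ S : NonUnitalStarSubalgebra ℂ (H →L[ℂ] H), (S : Set (H →L[ℂ] H)) = A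

/-- An orthogonal projection on `H`. -/
def IsProj (p : H →L[ℂ] H) : Prop := p * p = p ∧ IsSelfAdjoint p

/-- A rank-one operator on `H`. -/
def IsRankOne (p : H →L[ℂ] H) : Prop := Module.finrank ℂ (LinearMap.range (p : H →ₗ[ℂ] H)) = 1

/-- `B` is a maximal abelian (self-adjoint) subalgebra of `A`: it is commutative, and any
element of `A` commuting with all of `B` lies in `B`. -/
def IsMasaIn (B A : Set (H →L[ℂ] H)) : Prop :=
  B ⊆ A ∧ (∀ b₁ ∈ B, ∀ b₂ ∈ B, b₁ * b₂ = b₂ * b₁) ∧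
    ∀ a ∈ A, (∀ b ∈ B, a * b = b * a) → a ∈ B

/-- A minimal projection of `B`: a nonzero projection in `B` whose only subprojections in `B`
are `0` and itself. -/
def IsMinimalProjIn (B : Set (H →L[ℂ] H)) (p : H →L[ℂ] H) : Prop :=
  p ∈ B ∧ IsProj p ∧ p ≠ 0 ∧
    ∀ q ∈ B, IsProj q → q * p = q → q = 0 ∨ q = p

/-- A conditional expectation from `A` onto `B`: a positive linear contraction restricting to
the identity on `B` and satisfying the `B`-bimodule property. -/
def IsCondExp (A B : Set (H →L[ℂ] H)) (E : (H →L[ℂ] H) → H →L[ℂ] H) : Prop :=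
  (∀ a ∈ A, E a ∈ B) ∧
  (∀ a ∈ A, ∀ b ∈ A, E (a + b) = E a + E b) ∧
  (∀ (c : ℂ), ∀ a ∈ A, E (c • a) = c • E a) ∧
  (∀ a ∈ A, ‖E a‖ ≤ ‖a‖) ∧
  (∀ a ∈ A, a.IsPositive → (E a).IsPositive) ∧
  (∀ b ∈ B, E b = b) ∧
  (∀ b₁ ∈ B, ∀ b₂ ∈ B, ∀ a ∈ A, E (b₁ * a * b₂) = b₁ * E a * b₂)

/-- A faithful conditional expectation. -/
def IsFaithfulCondExp (A B : Set (H →L[ℂ] H)) (E : (H →L[ℂ] H) → H →L[ℂ] H) : Prop :=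
  IsCondExp A B E ∧ ∀ a ∈ A, E (star a * a) = 0 → a = 0

/-- The normaliser of `B` in `A`. -/
def NormalizerIn (A B : Set (H →L[ℂ] H)) : Set (H →L[ℂ] H) :=
  {a ∈ A | ∀ b ∈ B, a * b * star a ∈ B ∧ star a * b * a ∈ B}

/-- `B` contains an approximate unit for `A`: there is a net in `B` which converges in norm to
the identity when multiplied against any element of `A`. -/
def HasApproxUnitIn (B A : Set (H →L[ℂ] H)) : Prop :=
  ∃ (ι : Type) (l : Filter ι) (e : ι → H →L[ℂ] H), l.NeBot ∧ (∀ i, e i ∈ B) ∧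
    ∀ a ∈ A, Tendsto (fun i => e i * a) l (nhds a) ∧ Tendsto (fun i => a * e i) l (nhds a)

/-- The C*-algebra generated by a set `S` of operators: the norm closure of the star
subalgebra generated by `S`. -/
def CstarGen (S : Set (H →L[ℂ] H)) : Set (H →L[ℂ] H) :=
  closure ((NonUnitalStarAlgebra.adjoin ℂ S :
    NonUnitalStarSubalgebra ℂ (H →L[ℂ] H)) : Set (H →L[ℂ] H))

/-- The von Neumann algebra generated by a (self-adjoint) set: its double commutant. -/
def WStar (S : Set (H →L[ℂ] H)) : Set (H →L[ℂ] H) := Set.centralizer (Set.centralizer S)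

/-- `B` is a Cartan subalgebra of `A` (Renault): a MASA containing an approximate unit for `A`,
whose normaliser generates `A` as a C*-algebra, and which is the image of a faithful
conditional expectation. -/
def IsCartanIn (B A : Set (H →L[ℂ] H)) : Prop :=
  IsCstarSubalgebra A ∧ IsCstarSubalgebra B ∧
  IsMasaIn B A ∧ HasApproxUnitIn B A ∧
  CstarGen (NormalizerIn A B) = A ∧
  ∃ E, IsFaithfulCondExp A B E

/-- `B ⊆ A` is co-separable: `A` is generated as a C*-algebra by `B` together with countably
many elements of `A`. -/
def CoSeparableIn (B A : Set (H →L[ℂ] H)) : Prop :=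
  ∃ S : Set (H →L[ℂ] H), S.Countable ∧ S ⊆ A ∧ CstarGen (S ∪ B) = A

/-- A complete orthogonal family of rank-one projections: mutually orthogonal rank-one
projections whose ranges span a dense subspace of `H`. -/
def IsCompleteRankOneFamily {I : Type v} (p : I → H →L[ℂ] H) : Prop :=
  (∀ i, IsProj (p i) ∧ IsRankOne (p i)) ∧
  (∀ i j, i ≠ j → p i * p j = 0) ∧
  Dense ((⨆ i, LinearMap.range (p i : H →ₗ[ℂ] H) : Submodule ℂ H) : Set H)

/-- A complete orthogonal family of projections: mutually orthogonal projections summing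
strongly to the identity. -/
def IsCompleteProjFamily {I : Type v} (q : I → H →L[ℂ] H) : Prop :=
  (∀ i, IsProj (q i)) ∧ (∀ i j, i ≠ j → q i * q j = 0) ∧
  ∀ v : H, HasSum (fun i => q i v) v

/-- `B` is abstractly *-isomorphic to `ℓ∞(I)`. -/
def AbstractlyLinf (B : Set (H →L[ℂ] H)) (I : Type v) : Prop :=
  ∃ SB : NonUnitalStarSubalgebra ℂ (H →L[ℂ] H), (SB : Set (H →L[ℂ] H)) = B ∧
    Nonempty (SB ≃⋆ₐ[ℂ] lp (fun _ : I => ℂ) ∞)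

/-- A *-automorphism of the set `A` of operators. -/
def IsStarAutoOn (A : Set (H →L[ℂ] H)) (α : (H →L[ℂ] H) → H →L[ℂ] H) : Prop :=
  Set.BijOn α A A ∧
  (∀ a ∈ A, ∀ b ∈ A, α (a + b) = α a + α b) ∧
  (∀ a ∈ A, ∀ b ∈ A, α (a * b) = α a * α b) ∧
  (∀ (c : ℂ), ∀ a ∈ A, α (c • a) = c • α a) ∧
  ∀ a ∈ A, α (star a) = star (α a)

/-! ### `ℓ²(X)` and uniform Roe algebras -/

/-- `ℓ²(X)` with complex coefficients. -/
abbrev ell2 (X : Type v) : Type v := lp (fun _ : X => ℂ) 2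

/-- The canonical basis vector `δ_x` of `ℓ²(X)`. -/
def delta {X : Type v} (x : X) : ell2 X :=
  letI := Classical.decEq X
  lp.single 2 x 1

/-- The `(x,y)` matrix entry `⟨δ_x, a δ_y⟩` of an operator `a` on `ℓ²(X)`. -/
def matEntry {X : Type v} (a : ell2 X →L[ℂ] ell2 X) (x y : X) : ℂ := a (delta y) x

/-- The support of an operator on `ℓ²(X)`. -/
def opSupport {X : Type v} (a : ell2 X →L[ℂ] ell2 X) : Set (X × X) :=
  {q | matEntry a q.1 q.2 ≠ 0}

/-- `a` is a multiplication operator by a (necessarily bounded) function `X → ℂ`. -/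
def IsDiagonalOp {X : Type v} (a : ell2 X →L[ℂ] ell2 X) : Prop :=
  ∃ f : X → ℂ, ∀ (ξ : ell2 X) (x : X), a ξ x = f x * ξ x

/-- The copy of `ℓ∞(X)` inside `B(ℓ²(X))`, i.e. the multiplication operators. -/
def LinfOps (X : Type v) : Set (ell2 X →L[ℂ] ell2 X) := {a | IsDiagonalOp a}

/-- Finite propagation with respect to a metric. -/
def HasFinitePropagation {X : Type v} [MetricSpace X] (a : ell2 X →L[ℂ] ell2 X) : Prop :=
  ∃ r : ℝ, ∀ x y : X, matEntry a x y ≠ 0 → dist x y ≤ r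

/-- The uniform Roe algebra of a metric space: the norm closure of the finite propagation
operators on `ℓ²(X)`. -/
def RoeAlgebra (X : Type v) [MetricSpace X] : Set (ell2 X →L[ℂ] ell2 X) :=
  closure {a : ell2 X →L[ℂ] ell2 X | HasFinitePropagation a}

/-- A metric space has bounded geometry if balls of any fixed radius have uniformly
bounded (finite) cardinality. -/
def BoundedGeometry (X : Type v) [MetricSpace X] : Prop :=
  ∀ r : ℝ, ∃ N : ℕ, ∀ x : X,
    (Metric.closedBall x r).Finite ∧ (Metric.closedBall x r).ncard ≤ N

/-! ### Coarse structures -/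

/-- A coarse structure on a set `X` (Roe). -/
structure CoarseStructure (X : Type v) where
  sets : Set (Set (X × X))
  diag_mem : {q : X × X | q.1 = q.2} ∈ sets
  union_mem : ∀ ⦃E F⦄, E ∈ sets → F ∈ sets → E ∪ F ∈ sets
  comp_mem : ∀ ⦃E F⦄, E ∈ sets → F ∈ sets →
    {q : X × X | ∃ y, (q.1, y) ∈ E ∧ (y, q.2) ∈ F} ∈ sets
  inv_mem : ∀ ⦃E⦄, E ∈ sets → {q : X × X | (q.2, q.1) ∈ E} ∈ sets
  subset_mem : ∀ ⦃E F⦄, E ∈ sets → F ⊆ E → F ∈ sets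

/-- Bounded geometry: slices of every entourage have uniformly bounded cardinality. -/
def CoarseStructure.BoundedGeometry {X : Type v} (𝓔 : CoarseStructure X) : Prop :=
  ∀ E ∈ 𝓔.sets, ∃ k : ℕ, ∀ x : X,
    ({y | (x, y) ∈ E}.Finite ∧ {y | (x, y) ∈ E}.ncard ≤ k) ∧
    ({y | (y, x) ∈ E}.Finite ∧ {y | (y, x) ∈ E}.ncard ≤ k)

/-- Connectedness of a coarse structure. -/
def CoarseStructure.Connected {X : Type v} (𝓔 : CoarseStructure X) : Prop :=
  ∀ x y : X, ({(x, y)} : Set (X × X)) ∈ 𝓔.sets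

/-- `𝓔` is the coarse structure generated by the family `S`. -/
def CoarseStructure.IsGeneratedBy {X : Type v} (𝓔 : CoarseStructure X)
    (S : Set (Set (X × X))) : Prop :=
  S ⊆ 𝓔.sets ∧ ∀ 𝓓 : CoarseStructure X, S ⊆ 𝓓.sets → 𝓔.sets ⊆ 𝓓.sets

/-- The uniform Roe algebra of a coarse space. -/
def CoarseRoeAlgebra (X : Type v) (𝓔 : CoarseStructure X) :
    Set (ell2 X →L[ℂ] ell2 X) :=
  closure {a : ell2 X →L[ℂ] ell2 X | opSupport a ∈ 𝓔.sets}

/-! ### The coarse structure attached to a Cartan pair -/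

/-- The set of minimal projections of `B`, as a type. -/
abbrev MinProj (B : Set (H →L[ℂ] H)) : Type u := {p : H →L[ℂ] H // IsMinimalProjIn B p}

/-- The generating entourages `E_{a,ε}` of the coarse structure of a Cartan pair. -/
def cartanEntourages (A B : Set (H →L[ℂ] H)) : Set (Set (MinProj B × MinProj B)) :=
  {E | ∃ a ∈ NormalizerIn A B, ∃ ε : ℝ, 0 < ε ∧
    E = {q : MinProj B × MinProj B |
          ε ≤ ‖(q.1 : H →L[ℂ] H) * a * (q.2 : H →L[ℂ] H)‖}}

/-- Conjugation of an operator on `H` to an operator on `ℓ²(X)` by a unitary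
`u : ℓ²(X) → H`, i.e. `a ↦ u* a u`. -/
def conjDown {X : Type v} (u : ell2 X ≃ₗᵢ[ℂ] H) (a : H →L[ℂ] H) :
    ell2 X →L[ℂ] ell2 X :=
  ((u.symm.toContinuousLinearEquiv : H →L[ℂ] ell2 X).comp a).comp
    (u.toContinuousLinearEquiv : ell2 X →L[ℂ] H)

/-- Conjugation of an operator on `ℓ²(X)` to an operator on `H` by a unitary
`u : ℓ²(X) → H`, i.e. `a ↦ u a u*`. -/
def conjUp {X : Type v} (u : ell2 X ≃ₗᵢ[ℂ] H) (a : ell2 X →L[ℂ] ell2 X) :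
    H →L[ℂ] H :=
  ((u.toContinuousLinearEquiv : ell2 X →L[ℂ] H).comp a).comp
    (u.symm.toContinuousLinearEquiv : H →L[ℂ] ell2 X)

/-! ### Coarse maps -/

/-- A uniformly expansive map between metric spaces. -/
def UniformlyExpansive {X : Type u} {Y : Type v} [MetricSpace X] [MetricSpace Y]
    (f : X → Y) : Prop :=
  ∀ r : ℝ, ∃ s : ℝ, ∀ x x' : X, dist x x' ≤ r → dist (f x) (f x') ≤ s

/-- Two maps into a metric space are close. -/
def Close {X : Type u} {Y : Type v} [MetricSpace Y] (f g : X → Y) : Prop :=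
  ∃ C : ℝ, ∀ x : X, dist (f x) (g x) ≤ C

/-- A coarse equivalence between metric spaces. -/
def IsCoarseEquivalence {X : Type u} {Y : Type v} [MetricSpace X] [MetricSpace Y]
    (f : X → Y) : Prop :=
  UniformlyExpansive f ∧ ∃ g : Y → X, UniformlyExpansive g ∧
    Close (fun x => g (f x)) (fun x => x) ∧ Close (fun y => f (g y)) (fun y => y)

/-- `X` and `Y` are coarsely equivalent. -/
def CoarselyEquivalent (X : Type u) (Y : Type v) [MetricSpace X] [MetricSpace Y] : Prop :=
  ∃ f : X → Y, IsCoarseEquivalence f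

/-- A coarse embedding between metric spaces. -/
def IsCoarseEmbedding {X : Type u} {Y : Type v} [MetricSpace X] [MetricSpace Y]
    (f : X → Y) : Prop :=
  ∃ ρminus ρplus : ℝ → ℝ, Monotone ρminus ∧ Monotone ρplus ∧
    Tendsto ρminus atTop atTop ∧
    ∀ x x' : X, ρminus (dist x x') ≤ dist (f x) (f x') ∧
      dist (f x) (f x') ≤ ρplus (dist x x')

/-- `X` coarsely embeds into a (real) Hilbert space. -/
def CoarselyEmbeddableIntoHilbert (X : Type v) [MetricSpace X] : Prop :=
  ∃ (E : Type) (iE : NormedAddCommGroup E)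
    (_ : @InnerProductSpace ℝ E _ iE.toSeminormedAddCommGroup)
    (_ : @CompleteSpace E iE.toMetricSpace.toPseudoMetricSpace.toUniformSpace)
    (f : X → E),
    @IsCoarseEmbedding X E _ iE.toMetricSpace f

/-- The `r`-boundary of a subset of a metric space (Block–Weinberger). -/
def rBoundary {X : Type v} [MetricSpace X] (r : ℝ) (S : Set X) : Set X :=
  {x : X | (∃ s ∈ S, dist x s ≤ r) ∧ ∃ t ∉ S, dist x t ≤ r}

/-- Amenability in the sense of Block and Weinberger. -/
def BWAmenable (X : Type v) [MetricSpace X] : Prop :=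
  ∀ r > (0 : ℝ), ∀ ε > (0 : ℝ), ∃ S : Set X, S.Finite ∧ S.Nonempty ∧
    ((rBoundary r S).ncard : ℝ) ≤ ε * S.ncard

/-- Yu's property A. -/
def PropertyA (X : Type v) [MetricSpace X] : Prop :=
  ∀ r > (0 : ℝ), ∀ ε > (0 : ℝ), ∃ S > (0 : ℝ), ∃ ξ : X → ell2 X,
    (∀ x : X, ‖ξ x‖ = 1) ∧
    (∀ x y : X, ξ x y ≠ 0 → dist x y ≤ S) ∧
    ∀ x y : X, dist x y ≤ r → ‖ξ x - ξ y‖ ≤ ε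

/-- A *-isomorphism between the uniform Roe algebras of `X` and `Y`. -/
def IsStarIsoBetween (X : Type u) (Y : Type v) [MetricSpace X] [MetricSpace Y]
    (φ : (ell2 X →L[ℂ] ell2 X) → ell2 Y →L[ℂ] ell2 Y) : Prop :=
  Set.BijOn φ (RoeAlgebra X) (RoeAlgebra Y) ∧
  (∀ a ∈ RoeAlgebra X, ∀ b ∈ RoeAlgebra X, φ (a + b) = φ a + φ b) ∧
  (∀ a ∈ RoeAlgebra X, ∀ b ∈ RoeAlgebra X, φ (a * b) = φ a * φ b) ∧
  (∀ (c : ℂ), ∀ a ∈ RoeAlgebra X, φ (c • a) = c • φ a) ∧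
  ∀ a ∈ RoeAlgebra X, φ (star a) = star (φ a)

end RoeCartan

/-!
Distinct minimal projections of the commutative algebra `B` are orthogonal, so `p_x` is the
rank-one projection onto `ℂ ξ_x` and every element of `B` is diagonal in the basis `(ξ_x)`.
For a normaliser `n`, both `n p_y n*` and `n* p_x n` lie in `B`, so they are diagonal; this
forces the matrix of `u* n u` to have at most one nonzero entry in each row and each column.
The norm of such a matrix is the supremum of its entries, so cutting off the entries of size
`< ε` costs at most `ε`, and what remains is supported in `E_{n,ε}`. Hence `u* n u` lies in the
closed *-algebra `C*_u(X; 𝓔_A)`, and so does `u* A u`, as `A` is generated by its normalisers.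
-/

namespace RoeCartan

section MatrixEntries

variable {X : Type v}

lemma delta_apply_self (x : X) : (delta x : ell2 X) x = 1 := by
  let := Classical.decEq X
  exact lp.single_apply_self 2 x 1

lemma delta_apply_ne {x y : X} (h : y ≠ x) : (delta x : ell2 X) y = 0 := by
  let := Classical.decEq X
  exact lp.single_apply_ne 2 x 1 h

lemma norm_delta (x : X) : ‖(delta x : ell2 X)‖ = 1 := by
  let := Classical.decEq X
  exact (lp.norm_single (by norm_num) x 1).trans norm_one

lemma inner_delta_left (x : X) (f : ell2 X) : ⟪(delta x : ell2 X), f⟫_ℂ = f x := by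
  let := Classical.decEq X
  simp [delta, lp.inner_single_left]

lemma hasSum_smul_delta (f : ell2 X) : HasSum (fun y => f y • (delta y : ell2 X)) f := by
  let := Classical.decEq X
  convert lp.hasSum_single (E := fun _ : X => ℂ) (p := 2) (by norm_num) f with y
  rw [delta, ← lp.single_smul, smul_eq_mul, mul_one]

lemma hasSum_ell2_apply {ι : Type*} {g : ι → ell2 X} {f : ell2 X} (h : HasSum g f) (x : X) :
    HasSum (fun i => g i x) (f x) := by
  simpa only [innerSL_apply_apply, inner_delta_left] using
    h.mapL (innerSL ℂ (delta x : ell2 X))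

lemma hasSum_apply_mul_matEntry (a : ell2 X →L[ℂ] ell2 X) (f : ell2 X) (x : X) :
    HasSum (fun y => matEntry a x y * f y) (a f x) := by
  simpa only [map_smul, lp.coeFn_smul, Pi.smul_apply, smul_eq_mul, mul_comm (f _), matEntry] using
    hasSum_ell2_apply ((hasSum_smul_delta f).mapL a) x

lemma hasSum_matEntry_mul (a b : ell2 X →L[ℂ] ell2 X) (x y : X) :
    HasSum (fun z => matEntry a x z * matEntry b z y) (matEntry (a * b) x y) :=
  hasSum_apply_mul_matEntry a (b (delta y)) x

lemma matEntry_eq_inner (a : ell2 X →L[ℂ] ell2 X) (x y : X) :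
    matEntry a x y = ⟪(delta x : ell2 X), a (delta y)⟫_ℂ :=
  (inner_delta_left x _).symm

lemma matEntry_star (a : ell2 X →L[ℂ] ell2 X) (x y : X) :
    matEntry (star a) x y = starRingEnd ℂ (matEntry a y x) := by
  rw [matEntry_eq_inner, matEntry_eq_inner, ContinuousLinearMap.star_eq_adjoint,
    ContinuousLinearMap.adjoint_inner_right, inner_conj_symm]

lemma apply_eq_matEntry_mul_of_offDiag {a : ell2 X →L[ℂ] ell2 X}
    (h : ∀ x y, x ≠ y → matEntry a x y = 0) (f : ell2 X) (x : X) :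
    a f x = matEntry a x x * f x :=
  (hasSum_apply_mul_matEntry a f x).unique <|
    hasSum_single x fun y hy => by rw [h x y (Ne.symm hy), zero_mul]

lemma isDiagonalOp_of_offDiag {a : ell2 X →L[ℂ] ell2 X}
    (h : ∀ x y, x ≠ y → matEntry a x y = 0) : IsDiagonalOp a :=
  ⟨fun x => matEntry a x x, apply_eq_matEntry_mul_of_offDiag h⟩

lemma IsDiagonalOp.matEntry_eq_zero {a : ell2 X →L[ℂ] ell2 X} (ha : IsDiagonalOp a)
    {x y : X} (hxy : x ≠ y) : matEntry a x y = 0 := by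
  obtain ⟨f, hf⟩ := ha
  rw [matEntry, hf, delta_apply_ne hxy, mul_zero]

lemma IsDiagonalOp.norm_le {a : ell2 X →L[ℂ] ell2 X} (ha : IsDiagonalOp a) {C : ℝ} (hC : 0 ≤ C)
    (h : ∀ x, ‖matEntry a x x‖ ≤ C) : ‖a‖ ≤ C := by
  refine a.opNorm_le_bound hC fun f => ?_
  calc ‖a f‖ ≤ ‖(C : ℂ) • f‖ := lp.norm_mono two_ne_zero fun x => by
        rw [apply_eq_matEntry_mul_of_offDiag (fun _ _ => ha.matEntry_eq_zero) f x, norm_mul,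
          lp.coeFn_smul, Pi.smul_apply, norm_smul, Complex.norm_real, Real.norm_of_nonneg hC]
        exact mul_le_mul_of_nonneg_right (h x) (norm_nonneg _)
    _ = C * ‖f‖ := by rw [norm_smul, Complex.norm_real, Real.norm_of_nonneg hC]

lemma norm_le_of_apply_eq_zero_or {f : ell2 X} {C : ℝ} (hC : 0 ≤ C) (hf : ∀ x, ‖f x‖ ≤ C)
    (hsingle : ∀ x x', x ≠ x' → f x = 0 ∨ f x' = 0) : ‖f‖ ≤ C := by
  by_cases hzero : ∀ x, f x = 0
  · rw [show f = 0 from lp.ext (funext hzero), norm_zero]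
    exact hC
  push Not at hzero
  obtain ⟨x₀, hx₀⟩ := hzero
  have hf_eq : f = f x₀ • (delta x₀ : ell2 X) := by
    refine lp.ext (funext fun x => ?_)
    rw [lp.coeFn_smul, Pi.smul_apply, smul_eq_mul]
    by_cases hx : x = x₀
    · rw [hx, delta_apply_self, mul_one]
    · rw [delta_apply_ne hx, mul_zero]
      exact (hsingle x x₀ hx).resolve_right hx₀
  rw [hf_eq, norm_smul, norm_delta, mul_one]
  exact hf x₀

lemma matEntry_star_mul_self (r : ell2 X →L[ℂ] ell2 X) (x : X) :
    matEntry (star r * r) x x = ‖r (delta x)‖ ^ 2 := by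
  rw [matEntry_eq_inner, mul_apply_eq_comp, ContinuousLinearMap.star_eq_adjoint,
    ContinuousLinearMap.adjoint_inner_right, inner_self_eq_norm_sq_to_K]
  rfl

lemma norm_le_of_sparse {r : ell2 X →L[ℂ] ell2 X} {C : ℝ} (hC : 0 ≤ C)
    (hbound : ∀ x y, ‖matEntry r x y‖ ≤ C)
    (hrow : ∀ x y y', y ≠ y' → matEntry r x y = 0 ∨ matEntry r x y' = 0)
    (hcol : ∀ y x x', x ≠ x' → matEntry r x y = 0 ∨ matEntry r x' y = 0) :
    ‖r‖ ≤ C := by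
  have hcolumn (y : X) : ‖r (delta y)‖ ≤ C :=
    norm_le_of_apply_eq_zero_or hC (hbound · y) (hcol y)
  have hdiag : IsDiagonalOp (star r * r) := isDiagonalOp_of_offDiag fun y y' hyy' => by
    refine (hasSum_matEntry_mul (star r) r y y').unique (hasSum_zero.congr_fun fun x => ?_)
    rw [matEntry_star]
    rcases hrow x y y' hyy' with h | h <;> simp [h]
  have hstar : ‖star r * r‖ ≤ C * C := hdiag.norm_le (mul_self_nonneg C) fun y => by
    rw [matEntry_star_mul_self, ← Complex.ofReal_pow, Complex.norm_real, Real.norm_of_nonneg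
      (by positivity), sq]
    exact mul_self_le_mul_self (norm_nonneg _) (hcolumn y)
  rw [CStarRing.norm_star_mul_self (x := r)] at hstar
  exact (mul_self_le_mul_self_iff (norm_nonneg r) hC).2 hstar

def indicatorOp (S : Set X) : ell2 X →L[ℂ] ell2 X :=
  LinearMap.mkContinuous
    { toFun := fun f => ⟨S.indicator f, (lp.memℓp f).mono' (norm_indicator_le_norm_self (s := S) f)⟩
      map_add' := fun f g => lp.ext (S.indicator_add f g)
      map_smul' := fun c f => lp.ext (S.indicator_const_smul c f) }
    1 fun f => (one_mul ‖f‖).symm ▸ lp.norm_mono two_ne_zero (norm_indicator_le_norm_self (s := S) f)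

lemma indicatorOp_apply (S : Set X) (f : ell2 X) : ⇑(indicatorOp S f) = S.indicator f := rfl

lemma matEntry_mul_indicatorOp (a : ell2 X →L[ℂ] ell2 X) (S : Set X) (x y : X) :
    matEntry (a * indicatorOp S) x y = S.indicator (matEntry a x) y := by
  by_cases hy : y ∈ S
  · have : indicatorOp S (delta y) = delta y := lp.ext <| funext fun z => by
      rw [indicatorOp_apply]
      by_cases hz : z ∈ S
      · exact S.indicator_of_mem hz _
      · rw [S.indicator_of_notMem hz, delta_apply_ne (ne_of_mem_of_not_mem hy hz).symm]
    rw [S.indicator_of_mem hy, matEntry, mul_apply_eq_comp, this, matEntry]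
  · have : indicatorOp S (delta y) = 0 := lp.ext <| funext fun z => by
      rw [indicatorOp_apply]
      by_cases hz : z ∈ S
      · rw [S.indicator_of_mem hz, delta_apply_ne (ne_of_mem_of_not_mem hz hy)]; rfl
      · rw [S.indicator_of_notMem hz]; rfl
    rw [S.indicator_of_notMem hy, matEntry, mul_apply_eq_comp, this, map_zero]
    rfl

lemma matEntry_sub_mul_indicatorOp (a : ell2 X →L[ℂ] ell2 X) (S : Set X) (x y : X) :
    matEntry (a - a * indicatorOp S) x y = Sᶜ.indicator (matEntry a x) y := by
  rw [Set.indicator_compl, Pi.sub_apply, ← matEntry_mul_indicatorOp]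
  rfl

def largeColumns (a : ell2 X →L[ℂ] ell2 X) (δ : ℝ) : Set X := {y | ∃ x, δ ≤ ‖matEntry a x y‖}

lemma opSupport_mul_indicatorOp_largeColumns_subset {a : ell2 X →L[ℂ] ell2 X}
    (hcol : ∀ y x x', x ≠ x' → matEntry a x y = 0 ∨ matEntry a x' y = 0) {δ : ℝ} (hδ : 0 < δ) :
    opSupport (a * indicatorOp (largeColumns a δ)) ⊆ {q | δ ≤ ‖matEntry a q.1 q.2‖} := by
  rintro ⟨x, y⟩ hxy
  change matEntry _ x y ≠ 0 at hxy
  rw [matEntry_mul_indicatorOp] at hxy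
  have hy : y ∈ largeColumns a δ := by_contra fun hy => hxy (Set.indicator_of_notMem hy _)
  rw [Set.indicator_of_mem hy] at hxy
  obtain ⟨x', hx'⟩ := hy
  obtain rfl : x = x' := by
    by_contra hne
    rcases hcol y x x' hne with h | h
    · exact hxy h
    · rw [h, norm_zero] at hx'
      exact hx'.not_gt hδ
  exact hx'

lemma norm_sub_mul_indicatorOp_largeColumns_le {a : ell2 X →L[ℂ] ell2 X}
    (hrow : ∀ x y y', y ≠ y' → matEntry a x y = 0 ∨ matEntry a x y' = 0)
    (hcol : ∀ y x x', x ≠ x' → matEntry a x y = 0 ∨ matEntry a x' y = 0) {δ : ℝ} (hδ : 0 ≤ δ) :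
    ‖a - a * indicatorOp (largeColumns a δ)‖ ≤ δ := by
  have hzero {x y : X} {T : Set X} (h : matEntry a x y = 0) : T.indicator (matEntry a x) y = 0 :=
    Set.indicator_apply_eq_zero.2 fun _ => h
  refine norm_le_of_sparse hδ (fun x y => ?_) (fun x y y' hyy' => ?_) (fun y x x' hxx' => ?_)
  · rw [matEntry_sub_mul_indicatorOp]
    by_cases hy : y ∈ largeColumns a δ
    · rw [Set.indicator_of_notMem (Set.notMem_compl_iff.2 hy), norm_zero]
      exact hδ
    · rw [Set.indicator_of_mem hy]
      exact le_of_lt (not_le.1 fun h => hy ⟨x, h⟩)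
  · simp only [matEntry_sub_mul_indicatorOp]
    exact (hrow x y y' hyy').imp hzero hzero
  · simp only [matEntry_sub_mul_indicatorOp]
    exact (hcol y x x' hxx').imp hzero hzero

end MatrixEntries

section Support

variable {X : Type v} (𝓔 : CoarseStructure X)

def supportSubalgebra : NonUnitalStarSubalgebra ℂ (ell2 X →L[ℂ] ell2 X) where
  carrier := {a | opSupport a ∈ 𝓔.sets}
  zero_mem' := 𝓔.subset_mem 𝓔.diag_mem fun _ h => absurd rfl h
  add_mem' {a b} ha hb := 𝓔.subset_mem (𝓔.union_mem ha hb) fun q hq => by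
    by_contra h
    refine hq ?_
    change matEntry a q.1 q.2 + matEntry b q.1 q.2 = 0
    rw [not_not.1 fun ha => h (Or.inl ha), not_not.1 fun hb => h (Or.inr hb), add_zero]
  smul_mem' c {a} ha := 𝓔.subset_mem ha fun q hq h => hq <| by
    rw [show matEntry (c • a) q.1 q.2 = c * matEntry a q.1 q.2 from rfl, h, mul_zero]
  mul_mem' {a b} ha hb := 𝓔.subset_mem (𝓔.comp_mem ha hb) fun q hq => by
    by_contra h
    refine hq ((hasSum_matEntry_mul a b q.1 q.2).unique (hasSum_zero.congr_fun fun z => ?_))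
    by_cases hz : matEntry a q.1 z = 0
    · rw [hz, zero_mul]
    · rw [not_not.1 fun hb => h ⟨z, hz, hb⟩, mul_zero]
  star_mem' {a} ha := 𝓔.subset_mem (𝓔.inv_mem ha) fun q hq h => hq <| by
    rw [matEntry_star, h, map_zero]

end Support

section Conjugation

variable {H : Type u} [NormedAddCommGroup H] [InnerProductSpace ℂ H]
variable {X : Type v} (u : ell2 X ≃ₗᵢ[ℂ] H)

lemma continuous_conjDown : Continuous (conjDown u) :=
  (continuous_const.clm_comp continuous_id).clm_comp continuous_const

lemma symm_apply_eq_inner (v : H) (x : X) : u.symm v x = ⟪u (delta x), v⟫_ℂ := by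
  rw [← inner_delta_left, ← u.inner_map_map, u.apply_symm_apply]

lemma matEntry_conjDown (a : H →L[ℂ] H) (x y : X) :
    matEntry (conjDown u a) x y = ⟪u (delta x), a (u (delta y))⟫_ℂ := by
  rw [matEntry_eq_inner, ← u.inner_map_map]
  exact congrArg _ (u.apply_symm_apply _)

variable [CompleteSpace H]

def conjDownStarHom : (H →L[ℂ] H) →⋆ₙₐ[ℂ] (ell2 X →L[ℂ] ell2 X) :=
  u.symm.conjStarAlgEquiv.toStarAlgHom.toNonUnitalStarAlgHom

lemma conjDown_star (a : H →L[ℂ] H) : conjDown u (star a) = star (conjDown u a) :=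
  map_star (conjDownStarHom u) a

lemma conjDown_image_cstarGen_subset {S : Set (H →L[ℂ] H)} {𝓔 : CoarseStructure X}
    (hS : conjDown u '' S ⊆ CoarseRoeAlgebra X 𝓔) :
    conjDown u '' CstarGen S ⊆ CoarseRoeAlgebra X 𝓔 := by
  set T := (supportSubalgebra 𝓔).topologicalClosure.comap (conjDownStarHom u)
  have hT : IsClosed (T : Set (H →L[ℂ] H)) :=
    (supportSubalgebra 𝓔).isClosed_topologicalClosure.preimage (continuous_conjDown u)
  have hST : NonUnitalStarAlgebra.adjoin ℂ S ≤ T :=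
    NonUnitalStarAlgebra.adjoin_le fun a ha => hS ⟨a, ha, rfl⟩
  exact Set.image_subset_iff.2 (closure_minimal hST hT)

end Conjugation

section Cartan

variable {H : Type u} [NormedAddCommGroup H] [InnerProductSpace ℂ H] [CompleteSpace H]
variable {B : Set (H →L[ℂ] H)}

lemma IsCstarSubalgebra.mul_mem (hB : IsCstarSubalgebra B) {a b : H →L[ℂ] H} (ha : a ∈ B)
    (hb : b ∈ B) : a * b ∈ B := by
  obtain ⟨-, S, rfl⟩ := hB
  exact MulMemClass.mul_mem ha hb

lemma MinProj.inner_apply_left (x : MinProj B) (v w : H) : ⟪x.1 v, w⟫_ℂ = ⟪v, x.1 w⟫_ℂ :=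
  x.2.2.1.2.isSymmetric v w

/-- `p q` is a subprojection of both `p` and `q`, so minimality forces `p q = 0` or
`p = p q = q`. -/
lemma MinProj.mul_eq_zero (hB : IsCstarSubalgebra B)
    (hcomm : ∀ b₁ ∈ B, ∀ b₂ ∈ B, b₁ * b₂ = b₂ * b₁) {x y : MinProj B} (hxy : x ≠ y) :
    x.1 * y.1 = 0 := by
  obtain ⟨hpB, ⟨hpp, hps⟩, -, hpmin⟩ := x.2
  obtain ⟨hqB, ⟨hqq, hqs⟩, -, hqmin⟩ := y.2
  set p := x.1
  set q := y.1
  have hqp : q * p = p * q := hcomm q hqB p hpB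
  have hproj : IsProj (p * q) := by
    refine ⟨?_, ?_⟩
    · rw [mul_assoc, ← mul_assoc q, hqp, mul_assoc, hqq, ← mul_assoc, hpp]
    · rw [IsSelfAdjoint, star_mul, hqs.star_eq, hps.star_eq, hqp]
  have hpqB : p * q ∈ B := hB.mul_mem hpB hqB
  rcases hpmin _ hpqB hproj (by rw [mul_assoc, hqp, ← mul_assoc, hpp]) with h | hp
  · exact h
  rcases hqmin _ hpqB hproj (by rw [mul_assoc, hqq]) with h | hq
  · exact h
  exact absurd (Subtype.ext (hp.symm.trans hq)) hxy

variable (u : ell2 (MinProj B) ≃ₗᵢ[ℂ] H)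

lemma MinProj.apply_of_ne (hB : IsCstarSubalgebra B)
    (hcomm : ∀ b₁ ∈ B, ∀ b₂ ∈ B, b₁ * b₂ = b₂ * b₁)
    (hu : ∀ x : MinProj B, x.1 (u (delta x)) = u (delta x)) {x y : MinProj B} (hxy : x ≠ y) :
    x.1 (u (delta y)) = 0 := by
  rw [← hu y, ← mul_apply_eq_comp, MinProj.mul_eq_zero hB hcomm hxy]
  rfl

lemma MinProj.apply_eq_inner_smul (hB : IsCstarSubalgebra B)
    (hcomm : ∀ b₁ ∈ B, ∀ b₂ ∈ B, b₁ * b₂ = b₂ * b₁)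
    (hu : ∀ x : MinProj B, x.1 (u (delta x)) = u (delta x)) (x : MinProj B) (v : H) :
    x.1 v = ⟪u (delta x), v⟫_ℂ • u (delta x) := by
  apply u.symm.injective
  refine lp.ext (funext fun y => ?_)
  rw [map_smul, u.symm_apply_apply, lp.coeFn_smul, Pi.smul_apply, smul_eq_mul,
    symm_apply_eq_inner, ← x.inner_apply_left]
  by_cases hyx : y = x
  · rw [hyx, hu, delta_apply_self, mul_one]
  · rw [MinProj.apply_of_ne u hB hcomm hu (Ne.symm hyx), inner_zero_left, delta_apply_ne hyx,
      mul_zero]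

lemma matEntry_conjDown_eq_zero_of_mem (hB : IsCstarSubalgebra B)
    (hcomm : ∀ b₁ ∈ B, ∀ b₂ ∈ B, b₁ * b₂ = b₂ * b₁)
    (hu : ∀ x : MinProj B, x.1 (u (delta x)) = u (delta x)) {b : H →L[ℂ] H} (hb : b ∈ B)
    {x y : MinProj B} (hxy : x ≠ y) : matEntry (conjDown u b) x y = 0 := by
  rw [matEntry_conjDown, ← hu x, x.inner_apply_left, ← mul_apply_eq_comp,
    hcomm _ x.2.1 _ hb, mul_apply_eq_comp, MinProj.apply_of_ne u hB hcomm hu hxy, map_zero,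
    inner_zero_right]

lemma conjDown_mem_linfOps (hB : IsCstarSubalgebra B)
    (hcomm : ∀ b₁ ∈ B, ∀ b₂ ∈ B, b₁ * b₂ = b₂ * b₁)
    (hu : ∀ x : MinProj B, x.1 (u (delta x)) = u (delta x)) {b : H →L[ℂ] H} (hb : b ∈ B) :
    conjDown u b ∈ LinfOps (MinProj B) :=
  isDiagonalOp_of_offDiag fun _ _ => matEntry_conjDown_eq_zero_of_mem u hB hcomm hu hb

lemma norm_matEntry_conjDown_le (hu : ∀ x : MinProj B, x.1 (u (delta x)) = u (delta x))
    (a : H →L[ℂ] H) (x y : MinProj B) :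
    ‖matEntry (conjDown u a) x y‖ ≤ ‖x.1 * a * y.1‖ := by
  have hunit (z : MinProj B) : ‖u (delta z)‖ = 1 := by rw [u.norm_map, norm_delta]
  calc ‖matEntry (conjDown u a) x y‖ = ‖⟪u (delta x), (x.1 * a * y.1) (u (delta y))⟫_ℂ‖ := by
        rw [matEntry_conjDown, mul_apply_eq_comp, mul_apply_eq_comp, hu y,
          ← x.inner_apply_left, hu x]
    _ ≤ ‖u (delta x)‖ * ‖(x.1 * a * y.1) (u (delta y))‖ := norm_inner_le_norm _ _
    _ ≤ ‖x.1 * a * y.1‖ := by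
        simpa only [hunit, one_mul, mul_one] using (x.1 * a * y.1).le_opNorm (u (delta y))

lemma matEntry_conjDown_mul_minProj_mul (hB : IsCstarSubalgebra B)
    (hcomm : ∀ b₁ ∈ B, ∀ b₂ ∈ B, b₁ * b₂ = b₂ * b₁)
    (hu : ∀ x : MinProj B, x.1 (u (delta x)) = u (delta x)) (a c : H →L[ℂ] H)
    (x y z : MinProj B) :
    matEntry (conjDown u (a * y.1 * c)) x z =
      matEntry (conjDown u a) x y * matEntry (conjDown u c) y z := by
  rw [matEntry_conjDown, matEntry_conjDown, matEntry_conjDown, mul_apply_eq_comp,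
    mul_apply_eq_comp, MinProj.apply_eq_inner_smul u hB hcomm hu, map_smul, inner_smul_right,
    mul_comm]

variable {A : Set (H →L[ℂ] H)} {n : H →L[ℂ] H}

/-- `n p_y n*` lies in `B`, hence is diagonal, and its `(x, x')` entry is `n_{xy} conj n_{x'y}`. -/
lemma matEntry_conjDown_col_sparse_of_mem_normalizer (hB : IsCstarSubalgebra B)
    (hcomm : ∀ b₁ ∈ B, ∀ b₂ ∈ B, b₁ * b₂ = b₂ * b₁)
    (hu : ∀ x : MinProj B, x.1 (u (delta x)) = u (delta x)) (hn : n ∈ NormalizerIn A B)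
    (y : MinProj B) {x x' : MinProj B} (hxx' : x ≠ x') :
    matEntry (conjDown u n) x y = 0 ∨ matEntry (conjDown u n) x' y = 0 := by
  have h := matEntry_conjDown_eq_zero_of_mem u hB hcomm hu (hn.2 y.1 y.2.1).1 hxx'
  rwa [matEntry_conjDown_mul_minProj_mul u hB hcomm hu, conjDown_star, matEntry_star,
    mul_eq_zero, map_eq_zero] at h

lemma matEntry_conjDown_row_sparse_of_mem_normalizer (hB : IsCstarSubalgebra B)
    (hcomm : ∀ b₁ ∈ B, ∀ b₂ ∈ B, b₁ * b₂ = b₂ * b₁)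
    (hu : ∀ x : MinProj B, x.1 (u (delta x)) = u (delta x)) (hn : n ∈ NormalizerIn A B)
    (x : MinProj B) {y y' : MinProj B} (hyy' : y ≠ y') :
    matEntry (conjDown u n) x y = 0 ∨ matEntry (conjDown u n) x y' = 0 := by
  have h := matEntry_conjDown_eq_zero_of_mem u hB hcomm hu (hn.2 x.1 x.2.1).2 hyy'
  rwa [matEntry_conjDown_mul_minProj_mul u hB hcomm hu, conjDown_star, matEntry_star,
    mul_eq_zero, map_eq_zero] at h

lemma conjDown_mem_coarseRoeAlgebra_of_mem_normalizer (hB : IsCstarSubalgebra B)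
    (hcomm : ∀ b₁ ∈ B, ∀ b₂ ∈ B, b₁ * b₂ = b₂ * b₁)
    (hu : ∀ x : MinProj B, x.1 (u (delta x)) = u (delta x)) {𝓔 : CoarseStructure (MinProj B)}
    (h𝓔 : cartanEntourages A B ⊆ 𝓔.sets) (hn : n ∈ NormalizerIn A B) :
    conjDown u n ∈ CoarseRoeAlgebra (MinProj B) 𝓔 := by
  have hrow (x : MinProj B) {y y' : MinProj B} (hyy' : y ≠ y') :=
    matEntry_conjDown_row_sparse_of_mem_normalizer u hB hcomm hu hn x hyy'
  have hcol (y : MinProj B) {x x' : MinProj B} (hxx' : x ≠ x') :=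
    matEntry_conjDown_col_sparse_of_mem_normalizer u hB hcomm hu hn y hxx'
  refine Metric.mem_closure_iff.2 fun ε hε => ?_
  have hδ : 0 < ε / 2 := half_pos hε
  refine ⟨conjDown u n * indicatorOp (largeColumns (conjDown u n) (ε / 2)), ?_, ?_⟩
  · refine 𝓔.subset_mem (h𝓔 ⟨n, hn, ε / 2, hδ, rfl⟩) fun q hq => ?_
    exact (opSupport_mul_indicatorOp_largeColumns_subset (fun y _ _ => hcol y) hδ hq).trans
      (norm_matEntry_conjDown_le u hu n q.1 q.2)
  · rw [dist_eq_norm]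
    exact (norm_sub_mul_indicatorOp_largeColumns_le (fun x _ _ => hrow x) (fun y _ _ => hcol y)
      hδ.le).trans_lt (half_lt_self hε)

end Cartan

theorem stmt10_general {H : Type u} [NormedAddCommGroup H] [InnerProductSpace ℂ H] [CompleteSpace H]
    (A B : Set (H →L[ℂ] H))
    (hB : IsCartanIn B A)
    (ξ : MinProj B → H)
    (hξ : ∀ x : MinProj B, ‖ξ x‖ = 1 ∧ (x : {p : H →L[ℂ] H // IsMinimalProjIn B p}).val (ξ x) = ξ x)
    (u : ell2 (MinProj B) ≃ₗᵢ[ℂ] H) (hu : ∀ x : MinProj B, u (delta x) = ξ x)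
    (𝓔 : CoarseStructure (MinProj B))
    (hgen : 𝓔.IsGeneratedBy (cartanEntourages A B)) :
    conjDown u '' B ⊆ LinfOps (MinProj B) ∧
    conjDown u '' A ⊆ CoarseRoeAlgebra (MinProj B) 𝓔 := by
  obtain ⟨-, hBalg, ⟨-, hcomm, -⟩, -, hgenA, -⟩ := hB
  have hbasis (x : MinProj B) : x.1 (u (delta x)) = u (delta x) := by
    rw [hu]
    exact (hξ x).2
  refine ⟨?_, ?_⟩
  · rintro _ ⟨b, hb, rfl⟩
    exact conjDown_mem_linfOps u hBalg hcomm hbasis hb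
  · rw [← hgenA]
    refine conjDown_image_cstarGen_subset u ?_
    rintro _ ⟨n, hn, rfl⟩
    exact conjDown_mem_coarseRoeAlgebra_of_mem_normalizer u hBalg hcomm hbasis hgen.1 hn

/-- Conjugating by the unitary `u : ℓ²(X) → H` built from unit vectors in the
ranges of the minimal projections of `B`, one has `u* B u ⊆ ℓ∞(X)` and
`u* A u ⊆ C*_u(X;𝓔_A)`. -/
theorem stmt10 {H : Type u} [NormedAddCommGroup H] [InnerProductSpace ℂ H] [CompleteSpace H]
    (A B : Set (H →L[ℂ] H))
    (hunital : (1 : H →L[ℂ] H) ∈ A)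
    (hK : ∀ k : H →L[ℂ] H, IsCompactOperator (⇑k) → k ∈ A)
    (hB : IsCartanIn B A)
    (ξ : MinProj B → H)
    (hξ : ∀ x : MinProj B, ‖ξ x‖ = 1 ∧ (x : {p : H →L[ℂ] H // IsMinimalProjIn B p}).val (ξ x) = ξ x)
    (u : ell2 (MinProj B) ≃ₗᵢ[ℂ] H) (hu : ∀ x : MinProj B, u (delta x) = ξ x)
    (𝓔 : CoarseStructure (MinProj B))
    (hgen : 𝓔.IsGeneratedBy (cartanEntourages A B)) :
    conjDown u '' B ⊆ LinfOps (MinProj B) ∧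
    conjDown u '' A ⊆ CoarseRoeAlgebra (MinProj B) 𝓔 :=
  stmt10_general A B hB ξ hξ u hu 𝓔 hgen

end RoeCartan
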